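/- arXiv:1107.3303 — 3 statements merged into one kernel-verified Lean document; each statement's English description precedes it below -/
import Mathlib

section
/- Any subsemigroup of the bicyclic monoid containing the R-class of the identity is a straight left I-order in the bicyclic monoid. -/
def bmul (x y : ℕ × ℕ) : ℕ × ℕ :=
  (x.1 - x.2 + max x.2 y.1, y.2 - y.1 + max x.2 y.1)

def binv (x : ℕ × ℕ) : ℕ × ℕ := (x.2, x.1)

theorem stmt_7 (S : Set (ℕ × ℕ))
    (hsub : ∀ x ∈ S, ∀ y ∈ S, bmul x y ∈ S)
    (hR : ∀ j : ℕ, ((0 : ℕ), j) ∈ S) :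
    ∀ q : ℕ × ℕ, ∃ a ∈ S, ∃ b ∈ S, a.1 = b.1 ∧ q = bmul (binv a) b := by
  intro q
  exact ⟨(0, q.1), hR q.1, (0, q.2), hR q.2, rfl, by simp [bmul, binv]⟩
end

section
/- If an upper subsemigroup S of the bicyclic monoid (all elements (i,j) of S satisfy i ≤ j) is a left I-order in B, then S contains (0,h) for every h ∈ ℕ, i.e. the R-class of the identity is contained in S. -/
theorem stmt_11 (S : Set (ℕ × ℕ))
    (hsub : ∀ x ∈ S, ∀ y ∈ S, bmul x y ∈ S)
    (hupper : ∀ x ∈ S, x.1 ≤ x.2)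
    (hio : ∀ q : ℕ × ℕ, ∃ a ∈ S, ∃ b ∈ S, q = bmul (binv a) b) :
    ∀ h : ℕ, ((0 : ℕ), h) ∈ S := by
  intro h
  obtain ⟨⟨i, j⟩, ha, ⟨k, l⟩, hb, heq⟩ := hio (0, h)
  simp only [bmul, binv, Prod.mk.injEq] at heq
  obtain ⟨h1, h2⟩ := heq
  have hk : k = 0 := by omega
  have hl : l = h := by omega
  rwa [hk, hl] at hb
end

section
/- Every upper subsemigroup of the bicyclic monoid that is a left I-order in B is a straight left I-order: the factors a, b with q = a⁻¹b can be chosen R-related. -/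
theorem stmt_13 (S : Set (ℕ × ℕ))
    (hsub : ∀ x ∈ S, ∀ y ∈ S, bmul x y ∈ S)
    (hupper : ∀ x ∈ S, x.1 ≤ x.2)
    (hio : ∀ q : ℕ × ℕ, ∃ a ∈ S, ∃ b ∈ S, q = bmul (binv a) b) :
    ∀ q : ℕ × ℕ, ∃ a ∈ S, ∃ b ∈ S, a.1 = b.1 ∧ q = bmul (binv a) b := by
  have key : ∀ m : ℕ, ((0 : ℕ), m) ∈ S := by
    intro m
    obtain ⟨⟨i, j⟩, ha, ⟨k, l⟩, hb, heq⟩ := hio (m, 0)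
    have h1 := hupper _ ha
    have h2 := hupper _ hb
    simp only [bmul, binv, Prod.mk.injEq] at heq h1 h2
    have hi : i = 0 := by omega
    have hj : j = m := by omega
    subst hi hj
    exact ha
  intro q
  refine ⟨(0, q.1), key q.1, (0, q.2), key q.2, rfl, ?_⟩
  simp [bmul, binv]
end
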